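/- Let G be a pseudograph with n nodes and edge set of size m, with r redundant edges, where r is the minimal number of edges to remove to make G simple. Then every maximal tubing of G has exactly n − 1 + r tubes. -/

import Mathlib

/-- A pseudograph: finite-or-infinite multigraph with loops allowed,
    given by an endpoint map from edges to unordered pairs of vertices. -/
structure Pseudograph (V E : Type) where
  ends : E → Sym2 V

/-- A (not necessarily well-formed) subgraph datum: a set of vertices and a set of edges. -/
structure Piece (V E : Type) where
  verts : Set V
  edges : Set E

/-- Containment of subgraph data. -/
def Piece.Sub {V E : Type} (H K : Piece V E) : Prop :=
  H.verts ⊆ K.verts ∧ H.edges ⊆ K.edges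

namespace Pseudograph

variable {V E : Type}

/-- The whole graph, as a piece. -/
def wholePiece : Piece V E := ⟨Set.univ, Set.univ⟩

/-- Adjacency using only edges of the piece `H`. -/
def adjIn (G : Pseudograph V E) (H : Piece V E) (u w : V) : Prop :=
  ∃ e ∈ H.edges, G.ends e = s(u, w)

/-- The piece `H` is connected: nonempty vertex set, all vertices joined by walks in `H`. -/
def ConnectedPiece (G : Pseudograph V E) (H : Piece V E) : Prop :=
  H.verts.Nonempty ∧
    ∀ u ∈ H.verts, ∀ w ∈ H.verts, Relation.ReflTransGen (G.adjIn H) u w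

/-- A tube: a proper connected subgraph containing at least one edge between
    every pair of its nodes whenever `G` has such an edge. -/
def IsTube (G : Pseudograph V E) (H : Piece V E) : Prop :=
  (∀ e ∈ H.edges, ∀ v, v ∈ G.ends e → v ∈ H.verts) ∧
  G.ConnectedPiece H ∧
  H ≠ wholePiece ∧
  (∀ u ∈ H.verts, ∀ w ∈ H.verts, u ≠ w → (∃ e, G.ends e = s(u, w)) →
    ∃ e ∈ H.edges, G.ends e = s(u, w))

/-- Compatibility of tubes: one properly contains the other, or they are disjoint
    and cannot be connected by a single edge of `G`. -/
def Compatible (G : Pseudograph V E) (H K : Piece V E) : Prop :=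
  (H.Sub K ∧ H ≠ K) ∨ (K.Sub H ∧ K ≠ H) ∨
  (Disjoint H.verts K.verts ∧
    ¬ ∃ e, ∃ u ∈ H.verts, ∃ w ∈ K.verts, G.ends e = s(u, w))

/-- Adjacency in the whole graph. -/
def adj (G : Pseudograph V E) (u w : V) : Prop := ∃ e, G.ends e = s(u, w)

/-- The connected component of `v`, as a piece. -/
def compPiece (G : Pseudograph V E) (v : V) : Piece V E :=
  ⟨{u | Relation.ReflTransGen G.adj v u},
   {e | ∀ u, u ∈ G.ends e → Relation.ReflTransGen G.adj v u}⟩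

/-- A tubing: a set of pairwise compatible tubes not containing all component tubes. -/
def IsTubing (G : Pseudograph V E) (𝒯 : Set (Piece V E)) : Prop :=
  (∀ H ∈ 𝒯, G.IsTube H) ∧
  (∀ H ∈ 𝒯, ∀ K ∈ 𝒯, H ≠ K → G.Compatible H K) ∧
  ¬ ∀ v : V, G.compPiece v ∈ 𝒯

/-- The poset of tubings of `G`, ordered by reverse inclusion. -/
def Tubing (G : Pseudograph V E) := {𝒯 : Set (Piece V E) // G.IsTubing 𝒯}

instance (G : Pseudograph V E) : PartialOrder (G.Tubing) where
  le T T' := T'.1 ⊆ T.1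
  le_refl T := subset_rfl
  le_trans T₁ T₂ T₃ h h' := fun x hx => h (h' hx)
  le_antisymm T₁ T₂ h h' := Subtype.ext (subset_antisymm h' h)

end Pseudograph

namespace Pseudograph

variable {V E : Type}


/-- A maximal tubing. -/
def IsMaximalTubing (G : Pseudograph V E) (𝒯 : Set (Piece V E)) : Prop :=
  G.IsTubing 𝒯 ∧ ∀ 𝒯', G.IsTubing 𝒯' → 𝒯 ⊆ 𝒯' → 𝒯' = 𝒯


/-! ### Auxiliary development -/

section PieceOrder

variable {V E : Type}

instance : PartialOrder (Piece V E) where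
  le := Piece.Sub
  le_refl H := ⟨subset_rfl, subset_rfl⟩
  le_trans a b c h h' := ⟨h.1.trans h'.1, h.2.trans h'.2⟩
  le_antisymm a b h h' := by
    cases a; cases b
    simp only [Piece.mk.injEq]
    exact ⟨subset_antisymm h.1 h'.1, subset_antisymm h.2 h'.2⟩

theorem piece_le_def {H K : Piece V E} : H ≤ K ↔ H.Sub K := Iff.rfl

theorem piece_ext' {H K : Piece V E} (hv : H.verts = K.verts) (he : H.edges = K.edges) :
    H = K := by cases H; cases K; simp_all

instance [Finite V] [Finite E] : Finite (Piece V E) :=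
  Finite.of_injective (fun H => (H.verts, H.edges))
    (fun _ _ hab => piece_ext' (congrArg Prod.fst hab) (congrArg Prod.snd hab))

theorem le_whole (H : Piece V E) : H ≤ (wholePiece : Piece V E) :=
  ⟨Set.subset_univ _, Set.subset_univ _⟩

theorem ne_whole_of_lt {H K : Piece V E} (h : K < H) : K ≠ wholePiece := fun hK =>
  absurd (le_antisymm h.le (hK ▸ le_whole H)) h.ne

end PieceOrder

section Basics

variable {V E : Type} {G : Pseudograph V E}

/-- A tube without the properness requirement. -/
def Pretube (G : Pseudograph V E) (H : Piece V E) : Prop :=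
  (∀ e ∈ H.edges, ∀ v, v ∈ G.ends e → v ∈ H.verts) ∧
  G.ConnectedPiece H ∧
  (∀ u ∈ H.verts, ∀ w ∈ H.verts, u ≠ w → (∃ e, G.ends e = s(u, w)) →
    ∃ e ∈ H.edges, G.ends e = s(u, w))

theorem isTube_iff {H : Piece V E} : G.IsTube H ↔ G.Pretube H ∧ H ≠ wholePiece := by
  unfold IsTube Pretube; tauto

theorem Pretube.closed {H : Piece V E} (h : G.Pretube H) :
    ∀ e ∈ H.edges, ∀ v, v ∈ G.ends e → v ∈ H.verts := h.1

theorem Pretube.conn {H : Piece V E} (h : G.Pretube H) : G.ConnectedPiece H := h.2.1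

theorem Pretube.sat {H : Piece V E} (h : G.Pretube H) :
    ∀ u ∈ H.verts, ∀ w ∈ H.verts, u ≠ w → (∃ e, G.ends e = s(u, w)) →
      ∃ e ∈ H.edges, G.ends e = s(u, w) := h.2.2

theorem IsTube.pretube {H : Piece V E} (h : G.IsTube H) : G.Pretube H :=
  (isTube_iff.1 h).1

/-- Disjoint and non-adjacent. -/
def DisjNadj (G : Pseudograph V E) (H K : Piece V E) : Prop :=
  Disjoint H.verts K.verts ∧
    ¬ ∃ e, ∃ u ∈ H.verts, ∃ w ∈ K.verts, G.ends e = s(u, w)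

theorem DisjNadj.symm {H K : Piece V E} (h : G.DisjNadj H K) : G.DisjNadj K H := by
  refine ⟨h.1.symm, ?_⟩
  rintro ⟨e, u, hu, w, hw, he⟩
  exact h.2 ⟨e, w, hw, u, hu, by rw [he, Sym2.eq_swap]⟩

theorem DisjNadj.mono_right {H K K' : Piece V E} (h : G.DisjNadj H K) (hK : K' ≤ K) :
    G.DisjNadj H K' := by
  refine ⟨h.1.mono_right hK.1, ?_⟩
  rintro ⟨e, u, hu, w, hw, he⟩
  exact h.2 ⟨e, u, hu, w, hK.1 hw, he⟩

theorem DisjNadj.mono_left {H H' K : Piece V E} (h : G.DisjNadj H K) (hH : H' ≤ H) :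
    G.DisjNadj H' K := ((h.symm).mono_right hH).symm

theorem compatible_iff {H K : Piece V E} :
    G.Compatible H K ↔ H < K ∨ K < H ∨ G.DisjNadj H K := by
  unfold Compatible DisjNadj
  rw [lt_iff_le_and_ne, lt_iff_le_and_ne]
  exact Iff.rfl

theorem Compatible.symm {H K : Piece V E} (h : G.Compatible H K) : G.Compatible K H := by
  rw [compatible_iff] at h ⊢
  rcases h with h | h | h
  · exact Or.inr (Or.inl h)
  · exact Or.inl h
  · exact Or.inr (Or.inr h.symm)

theorem sym2_exists (p : Sym2 V) : ∃ x y, p = s(x, y) :=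
  Sym2.inductionOn p fun x y => ⟨x, y, rfl⟩

/-- Lifting reflexive-transitive closures. -/
theorem rtg_lift {α : Type*} {r s : α → α → Prop}
    (h : ∀ a b, r a b → Relation.ReflTransGen s a b) {a b : α}
    (hab : Relation.ReflTransGen r a b) : Relation.ReflTransGen s a b := by
  induction hab with
  | refl => exact Relation.ReflTransGen.refl
  | tail _ h₂ ih => exact ih.trans (h _ _ h₂)

theorem adjIn_symm {H : Piece V E} {u w : V} (h : G.adjIn H u w) : G.adjIn H w u := by
  obtain ⟨e, he, hends⟩ := h
  exact ⟨e, he, by rw [hends, Sym2.eq_swap]⟩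

theorem adjIn_mono {H K : Piece V E} (hHK : H.edges ⊆ K.edges) {u w : V}
    (h : G.adjIn H u w) : G.adjIn K u w := by
  obtain ⟨e, he, hends⟩ := h
  exact ⟨e, hHK he, hends⟩

theorem adj_symm {u w : V} (h : G.adj u w) : G.adj w u := by
  obtain ⟨e, hends⟩ := h
  exact ⟨e, by rw [hends, Sym2.eq_swap]⟩

theorem reach_symm {u w : V} (h : Relation.ReflTransGen G.adj u w) :
    Relation.ReflTransGen G.adj w u :=
  (@Relation.ReflTransGen.stdSymm _ _ ⟨fun _ _ => adj_symm⟩).symm _ _ h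

/-- Crossing lemma : a walk from inside `A` to outside `A` crosses an edge. -/
theorem exists_crossing {H : Piece V E} {A : Set V} {y x : V}
    (hw : Relation.ReflTransGen (G.adjIn H) y x) (hy : y ∈ A) (hx : x ∉ A) :
    ∃ a ∈ A, ∃ b, b ∉ A ∧ ∃ e ∈ H.edges, G.ends e = s(a, b) := by
  induction hw with
  | refl => exact absurd hy hx
  | @tail b c h₁ h₂ ih =>
    by_cases hb : b ∈ A
    · obtain ⟨e, he, hends⟩ := h₂
      exact ⟨b, hb, c, hx, e, he, hends⟩
    · exact ih hb

end Basics

section Components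

variable {V E : Type} {G : Pseudograph V E}

theorem mem_comp_self (v : V) : v ∈ (G.compPiece v).verts := Relation.ReflTransGen.refl

theorem comp_eq_of_reach {v u : V} (h : Relation.ReflTransGen G.adj v u) :
    G.compPiece v = G.compPiece u := by
  have key : ∀ x, Relation.ReflTransGen G.adj v x ↔ Relation.ReflTransGen G.adj u x :=
    fun x => ⟨fun hx => (reach_symm h).trans hx, fun hx => h.trans hx⟩
  apply piece_ext'
  · ext x; exact key x
  · ext e
    constructor
    · intro he x hx; exact (key x).1 (he x hx)
    · intro he x hx; exact (key x).2 (he x hx)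

theorem comp_pretube (v : V) : G.Pretube (G.compPiece v) := by
  refine ⟨fun e he x hx => he x hx, ⟨⟨v, mem_comp_self v⟩, ?_⟩, ?_⟩
  · intro u hu w hw
    have huw : Relation.ReflTransGen G.adj u w := (reach_symm hu).trans hw
    clear hw
    induction huw with
    | refl => exact Relation.ReflTransGen.refl
    | @tail b c h₁ h₂ ih =>
      have hvb : Relation.ReflTransGen G.adj v b := hu.trans h₁
      have hvc : Relation.ReflTransGen G.adj v c := hvb.tail h₂
      obtain ⟨e, hends⟩ := h₂
      refine (ih).tail ⟨e, ?_, hends⟩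
      intro x hx
      rw [hends, Sym2.mem_iff] at hx
      rcases hx with rfl | rfl
      · exact hvb
      · exact hvc
  · intro u hu w hw _ hex
    obtain ⟨e, hends⟩ := hex
    refine ⟨e, ?_, hends⟩
    intro x hx
    rw [hends, Sym2.mem_iff] at hx
    rcases hx with rfl | rfl
    · exact hu
    · exact hw

theorem pretube_le_comp {H : Piece V E} (h : G.Pretube H) {v : V} (hv : v ∈ H.verts) :
    H ≤ G.compPiece v := by
  have hverts : ∀ w ∈ H.verts, Relation.ReflTransGen G.adj v w := by
    intro w hw
    exact rtg_lift (fun a b hab => Relation.ReflTransGen.single ⟨hab.choose, hab.choose_spec.2⟩)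
      (h.conn.2 v hv w hw)
  constructor
  · exact hverts
  · intro e he x hx
    exact hverts x (h.closed e he x hx)

theorem comp_compatible {L : Piece V E} (hL : G.Pretube L) (v : V) :
    L ≤ G.compPiece v ∨ G.DisjNadj (G.compPiece v) L := by
  by_cases hx : ∃ x, x ∈ L.verts ∧ x ∈ (G.compPiece v).verts
  · obtain ⟨x, hxL, hxv⟩ := hx
    left
    calc L ≤ G.compPiece x := pretube_le_comp hL hxL
    _ = G.compPiece v := (comp_eq_of_reach hxv).symm
  · right
    push_neg at hx
    constructor
    · rw [Set.disjoint_right]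
      intro a haL hav
      exact hx a haL hav
    · rintro ⟨e, u, hu, w, hw, hends⟩
      exact hx w hw (hu.tail ⟨e, hends⟩)

end Components

section Max

variable {V E : Type} {G : Pseudograph V E} {𝒯 : Set (Piece V E)}

theorem insert_tubing (h𝒯 : G.IsTubing 𝒯) {K : Piece V E} (hK : G.IsTube K)
    (hcomp : ∀ L ∈ 𝒯, K ≠ L → G.Compatible K L)
    (hw : ∃ w, G.compPiece w ∉ 𝒯 ∧ G.compPiece w ≠ K) :
    G.IsTubing (insert K 𝒯) := by
  obtain ⟨hT1, hT2, hT3⟩ := h𝒯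
  refine ⟨?_, ?_, ?_⟩
  · rintro H (rfl | hH)
    · exact hK
    · exact hT1 H hH
  · rintro H (rfl | hH) L (rfl | hL) hne
    · exact absurd rfl hne
    · exact hcomp L hL hne
    · exact (hcomp H hH (Ne.symm hne)).symm
    · exact hT2 H hH L hL hne
  · intro hall
    obtain ⟨w, hw1, hw2⟩ := hw
    rcases Set.mem_insert_iff.1 (hall w) with h | h
    · exact hw2 h
    · exact hw1 h

theorem missing_unique (hmax : G.IsMaximalTubing 𝒯) {v w : V}
    (hv : G.compPiece v ∉ 𝒯) (hw : G.compPiece w ∉ 𝒯) :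
    G.compPiece v = G.compPiece w := by
  by_contra hne
  have htube : G.IsTube (G.compPiece v) := by
    rw [isTube_iff]
    refine ⟨comp_pretube v, ?_⟩
    intro hwhole
    apply hne
    have hverts : ∀ u, Relation.ReflTransGen G.adj v u := by
      intro u
      have hu : u ∈ (G.compPiece v).verts := by rw [hwhole]; trivial
      exact hu
    have h1 : G.compPiece w = wholePiece := by
      apply piece_ext'
      · ext u
        simp only [wholePiece, Set.mem_univ, iff_true]
        exact (reach_symm (hverts w)).trans (hverts u)
      · ext e
        simp only [wholePiece, Set.mem_univ, iff_true]
        intro x _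
        exact (reach_symm (hverts w)).trans (hverts x)
    rw [hwhole, h1]
  have hcomp : ∀ L ∈ 𝒯, G.compPiece v ≠ L → G.Compatible (G.compPiece v) L := by
    intro L hL hne'
    rcases comp_compatible ((hmax.1.1 L hL).pretube) v with h | h
    · rw [compatible_iff]
      exact Or.inr (Or.inl (lt_of_le_of_ne h fun hEq => hne' hEq.symm))
    · rw [compatible_iff]
      exact Or.inr (Or.inr h)
  have htub : G.IsTubing (insert (G.compPiece v) 𝒯) :=
    insert_tubing hmax.1 htube hcomp ⟨w, hw, fun hEq => hne hEq.symm⟩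
  have heq := hmax.2 _ htub (Set.subset_insert _ _)
  exact hv (heq ▸ Set.mem_insert _ 𝒯)

theorem node_pretube (hmax : G.IsMaximalTubing 𝒯) {v₀ : V} {H : Piece V E}
    (hH : H ∈ insert (G.compPiece v₀) 𝒯) : G.Pretube H := by
  rcases Set.mem_insert_iff.1 hH with rfl | hH
  · exact comp_pretube v₀
  · exact (hmax.1.1 H hH).pretube

theorem not_P0_lt (hmax : G.IsMaximalTubing 𝒯) {v₀ : V} (hv₀ : G.compPiece v₀ ∉ 𝒯)
    {H : Piece V E} (hH : H ∈ insert (G.compPiece v₀) 𝒯) :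
    ¬ (G.compPiece v₀ < H) := by
  intro hlt
  rcases Set.mem_insert_iff.1 hH with rfl | hH
  · exact lt_irrefl _ hlt
  · have h1 : H ≤ G.compPiece v₀ :=
      pretube_le_comp (hmax.1.1 H hH).pretube (hlt.le.1 (mem_comp_self v₀))
    exact absurd (le_antisymm h1 hlt.le) hlt.ne'

theorem mem_of_compat (hmax : G.IsMaximalTubing 𝒯) {v₀ : V} (hv₀ : G.compPiece v₀ ∉ 𝒯)
    {K : Piece V E} (hK : G.IsTube K)
    (hcomp : ∀ L ∈ 𝒯, K ≠ L → G.Compatible K L) (hKP : K ≠ G.compPiece v₀) :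
    K ∈ 𝒯 := by
  by_contra hKT
  have htub : G.IsTubing (insert K 𝒯) :=
    insert_tubing hmax.1 hK hcomp ⟨v₀, hv₀, fun hEq => hKP hEq.symm⟩
  have heq := hmax.2 _ htub (Set.subset_insert _ _)
  exact hKT (heq ▸ Set.mem_insert _ 𝒯)

/-- `C` is a child of `H` relative to the tubing `𝒯`: a maximal tube strictly below `H`. -/
def Child (𝒯 : Set (Piece V E)) (H C : Piece V E) : Prop :=
  C ∈ 𝒯 ∧ C < H ∧ ∀ L ∈ 𝒯, C ≤ L → L < H → L = C

theorem exists_child_le (hfin : 𝒯.Finite) {K H : Piece V E} (hK : K ∈ 𝒯) (hKH : K < H) :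
    ∃ C, Child 𝒯 H C ∧ K ≤ C := by
  have hs : {L ∈ 𝒯 | K ≤ L ∧ L < H}.Finite := hfin.subset (Set.sep_subset _ _)
  obtain ⟨C, ⟨hC𝒯, hKC, hCH⟩, hmaxC⟩ : ∃ C ∈ {L ∈ 𝒯 | K ≤ L ∧ L < H},
      ∀ L ∈ {L ∈ 𝒯 | K ≤ L ∧ L < H}, C ≤ L → C = L := by
    obtain ⟨b, -, hb⟩ := hs.exists_le_maximal (a := K) ⟨hK, le_refl K, hKH⟩
    exact ⟨b, hb.1, fun L hL h => le_antisymm h (hb.2 hL h)⟩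
  refine ⟨C, ⟨hC𝒯, hCH, ?_⟩, hKC⟩
  intro L hL hCL hLH
  exact (hmaxC L ⟨hL, hKC.trans hCL, hLH⟩ hCL).symm

theorem child_disjNadj (hmax : G.IsMaximalTubing 𝒯) {H C₁ C₂ : Piece V E}
    (h1 : Child 𝒯 H C₁) (h2 : Child 𝒯 H C₂) (hne : C₁ ≠ C₂) : G.DisjNadj C₁ C₂ := by
  have hcomp := hmax.1.2.1 C₁ h1.1 C₂ h2.1 hne
  rw [compatible_iff] at hcomp
  rcases hcomp with h | h | h
  · exact absurd (h1.2.2 C₂ h2.1 h.le h2.2.1) (Ne.symm hne)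
  · exact absurd (h2.2.2 C₁ h1.1 h.le h1.2.1) hne
  · exact h

theorem key_lemma (hmax : G.IsMaximalTubing 𝒯) {v₀ : V} (hv₀ : G.compPiece v₀ ∉ 𝒯)
    (hfin : 𝒯.Finite) {H : Piece V E} (hH : H ∈ insert (G.compPiece v₀) 𝒯)
    {K : Piece V E} (hKt : G.IsTube K) (hKH : K < H)
    (hch : ∀ C, Child 𝒯 H C → C ≤ K ∨ G.DisjNadj K C) :
    ∃ C, Child 𝒯 H C ∧ K ≤ C := by
  have hKT : K ∈ 𝒯 := by
    by_cases hKT' : K ∈ 𝒯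
    · exact hKT'
    have hcomp : ∀ L ∈ 𝒯, K ≠ L → G.Compatible K L := by
      intro L hL hne
      have hLH : L = H ∨ L < H ∨ H < L ∨ G.DisjNadj H L := by
        rcases Set.mem_insert_iff.1 hH with rfl | hHT
        · rcases comp_compatible (hmax.1.1 L hL).pretube v₀ with h | h
          · rcases eq_or_lt_of_le h with h' | h'
            · exact Or.inl h'
            · exact Or.inr (Or.inl h')
          · exact Or.inr (Or.inr (Or.inr h))
        · by_cases hLH' : L = H
          · exact Or.inl hLH'
          · have := hmax.1.2.1 H hHT L hL (Ne.symm hLH')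
            rw [compatible_iff] at this
            rcases this with h | h | h
            · exact Or.inr (Or.inr (Or.inl h))
            · exact Or.inr (Or.inl h)
            · exact Or.inr (Or.inr (Or.inr h))
      rw [compatible_iff]
      rcases hLH with rfl | hLH | hHL | hdisj
      · exact Or.inl hKH
      · obtain ⟨C, hC, hLC⟩ := exists_child_le hfin hL hLH
        rcases hch C hC with h | h
        · exact Or.inr (Or.inl (lt_of_le_of_ne (hLC.trans h) (Ne.symm hne)))
        · exact Or.inr (Or.inr (h.mono_right hLC))
      · exact Or.inl (hKH.trans hHL)
      · exact Or.inr (Or.inr ((hdisj.mono_left hKH.le)))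
    exact mem_of_compat hmax hv₀ hKt hcomp
      (fun hEq => not_P0_lt hmax hv₀ hH (hEq ▸ hKH))
  exact exists_child_le hfin hKT hKH

end Max

section Own

variable {V E : Type} {G : Pseudograph V E} {𝒯 : Set (Piece V E)}

/-- Vertices of `H` not belonging to any child. -/
def ownVerts (𝒯 : Set (Piece V E)) (H : Piece V E) : Set V :=
  {v | v ∈ H.verts ∧ ∀ C, Child 𝒯 H C → v ∉ C.verts}

/-- Edges of `H` not belonging to any child. -/
def ownEdges (𝒯 : Set (Piece V E)) (H : Piece V E) : Set E :=
  {e | e ∈ H.edges ∧ ∀ C, Child 𝒯 H C → e ∉ C.edges}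

/-- The piece `H` realizes the edge type `p`. -/
def realizes (G : Pseudograph V E) (H : Piece V E) (p : Sym2 V) : Prop :=
  ∃ e ∈ H.edges, G.ends e = p

/-- Nondiagonal edge types realized in `H` but in no child. -/
def ownTypes (G : Pseudograph V E) (𝒯 : Set (Piece V E)) (H : Piece V E) : Set (Sym2 V) :=
  {p | ¬ p.IsDiag ∧ G.realizes H p ∧ ∀ C, Child 𝒯 H C → ¬ G.realizes C p}

/-- One step inside `H`, avoiding the vertex `u₀`, where whole children may be traversed. -/
def stepRel (G : Pseudograph V E) (𝒯 : Set (Piece V E)) (H : Piece V E) (u₀ : V) (x y : V) :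
    Prop :=
  (x ≠ u₀ ∧ y ≠ u₀ ∧ ∃ e ∈ H.edges, G.ends e = s(x, y)) ∨
  (∃ C, Child 𝒯 H C ∧ x ∈ C.verts ∧ y ∈ C.verts)

theorem S_lemma (hmax : G.IsMaximalTubing 𝒯) {v₀ : V} (hv₀ : G.compPiece v₀ ∉ 𝒯)
    (hfin : 𝒯.Finite) {H : Piece V E} (hH : H ∈ insert (G.compPiece v₀) 𝒯)
    {u₀ : V} (hu₀ : u₀ ∈ ownVerts 𝒯 H) {x₀ : V} (hx₀ : x₀ ∈ H.verts) (hx₀u₀ : x₀ ≠ u₀) :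
    ∃ C, Child 𝒯 H C ∧
      (∀ y, Relation.ReflTransGen (stepRel G 𝒯 H u₀) x₀ y → y ∈ C.verts) ∧
      (∀ e ∈ H.edges, (∀ x ∈ G.ends e, Relation.ReflTransGen (stepRel G 𝒯 H u₀) x₀ x) →
        e ∈ C.edges) := by
  have hHpre := node_pretube hmax hH
  set S : Set V := {y | Relation.ReflTransGen (stepRel G 𝒯 H u₀) x₀ y} with hSdef
  have hx₀S : x₀ ∈ S := Relation.ReflTransGen.refl
  have hSsub : S ⊆ H.verts := by
    intro y hy
    induction hy with
    | refl => exact hx₀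
    | @tail b c h₁ h₂ ih =>
      rcases h₂ with ⟨-, -, e, he, hends⟩ | ⟨C, hC, -, hcC⟩
      · exact hHpre.closed e he c (by rw [hends]; exact Sym2.mem_mk_right _ _)
      · exact hC.2.1.le.1 hcC
  have hSneu₀ : ∀ y ∈ S, y ≠ u₀ := by
    intro y hy
    induction hy with
    | refl => exact hx₀u₀
    | @tail b c h₁ h₂ ih =>
      rcases h₂ with ⟨-, hcu₀, -⟩ | ⟨C, hC, -, hcC⟩
      · exact hcu₀
      · exact fun hEq => hu₀.2 C hC (hEq ▸ hcC)
  have hSu₀ : u₀ ∉ S := fun hu₀S => hSneu₀ u₀ hu₀S rfl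
  set K : Piece V E := ⟨S, {e | e ∈ H.edges ∧ ∀ x ∈ G.ends e, x ∈ S}⟩ with hKdef
  have hKleH : K ≤ H := ⟨hSsub, fun e he => he.1⟩
  have hKneH : K ≠ H := by
    intro hEq
    exact hSu₀ (show u₀ ∈ K.verts by rw [hEq]; exact hu₀.1)
  have hKlt : K < H := lt_of_le_of_ne hKleH hKneH
  have hCsub : ∀ C, Child 𝒯 H C → ∀ x, x ∈ C.verts → x ∈ S → C.verts ⊆ S := by
    intro C hC x hxC hxS z hz
    exact hxS.tail (Or.inr ⟨C, hC, hxC, hz⟩)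
  have hreach : ∀ y ∈ S, Relation.ReflTransGen (G.adjIn K) x₀ y := by
    intro y hy
    induction hy with
    | refl => exact Relation.ReflTransGen.refl
    | @tail b c h₁ h₂ ih =>
      have hbS : b ∈ S := h₁
      have hcS : c ∈ S := h₁.tail h₂
      rcases h₂ with ⟨hbu₀, hcu₀, e, he, hends⟩ | ⟨C, hC, hbC, hcC⟩
      · refine ih.tail ⟨e, ⟨he, ?_⟩, hends⟩
        intro x hx
        rw [hends, Sym2.mem_iff] at hx
        rcases hx with rfl | rfl
        · exact hbS
        · exact hcS
      · have hCS : C.verts ⊆ S := hCsub C hC b hbC hbS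
        have hCtube := hmax.1.1 C hC.1
        have hwalk := hCtube.pretube.conn.2 b hbC c hcC
        refine ih.trans (rtg_lift ?_ hwalk)
        intro a b' hab
        obtain ⟨e, heC, hends⟩ := hab
        refine Relation.ReflTransGen.single ⟨e, ⟨hC.2.1.le.2 heC, ?_⟩, hends⟩
        intro x hx
        exact hCS (hCtube.pretube.closed e heC x hx)
  have hKtube : G.IsTube K := by
    rw [isTube_iff]
    refine ⟨⟨fun e he x hx => he.2 x hx, ⟨⟨x₀, hx₀S⟩, ?_⟩, ?_⟩, ne_whole_of_lt hKlt⟩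
    · intro u hu w hw
      have hsymm : Symmetric (G.adjIn K) := fun _ _ h => adjIn_symm h
      exact ((@Relation.ReflTransGen.stdSymm _ _ ⟨hsymm⟩).symm _ _ (hreach u hu)).trans (hreach w hw)
    · intro u hu w hw hne hex
      obtain ⟨e, he, hends⟩ := hHpre.sat u (hSsub hu) w (hSsub hw) hne hex
      refine ⟨e, ⟨he, ?_⟩, hends⟩
      intro x hx
      rw [hends, Sym2.mem_iff] at hx
      rcases hx with rfl | rfl
      · exact hu
      · exact hw
  have hch : ∀ C, Child 𝒯 H C → C ≤ K ∨ G.DisjNadj K C := by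
    intro C hC
    by_cases hCS : ∃ x, x ∈ C.verts ∧ x ∈ S
    · obtain ⟨x, hxC, hxS⟩ := hCS
      have hCsubS := hCsub C hC x hxC hxS
      left
      refine ⟨hCsubS, ?_⟩
      intro e he
      have hCtube := hmax.1.1 C hC.1
      exact ⟨hC.2.1.le.2 he, fun z hz => hCsubS (hCtube.pretube.closed e he z hz)⟩
    · push_neg at hCS
      right
      constructor
      · rw [Set.disjoint_left]
        intro a haS haC
        exact hCS a haC haS
      · rintro ⟨e, u, huS, w, hwC, hends⟩
        have hne : u ≠ w := fun hEq => hCS w hwC (hEq ▸ huS)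
        obtain ⟨e', he', hends'⟩ :=
          hHpre.sat u (hSsub huS) w (hC.2.1.le.1 hwC) hne ⟨e, hends⟩
        have hstep : stepRel G 𝒯 H u₀ u w :=
          Or.inl ⟨hSneu₀ u huS, fun hEq => hu₀.2 C hC (hEq ▸ hwC), e', he', hends'⟩
        exact hCS w hwC (huS.tail hstep)
  obtain ⟨C, hC, hKC⟩ := key_lemma hmax hv₀ hfin hH hKtube hKlt hch
  refine ⟨C, hC, ?_, ?_⟩
  · intro y hy
    exact hKC.1 hy
  · intro e he hall
    exact hKC.2 ⟨he, hall⟩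

end Own

section Removal

variable {V E : Type} {G : Pseudograph V E} {𝒯 : Set (Piece V E)}

theorem remove_edge_child (hmax : G.IsMaximalTubing 𝒯) {v₀ : V}
    (hv₀ : G.compPiece v₀ ∉ 𝒯) (hfin : 𝒯.Finite) {H : Piece V E}
    (hH : H ∈ insert (G.compPiece v₀) 𝒯) {e₂ : E} (he₂H : e₂ ∈ H.edges)
    (he₂own : ∀ C, Child 𝒯 H C → e₂ ∉ C.edges)
    (hconn : G.ConnectedPiece ⟨H.verts, H.edges \ {e₂}⟩)
    (hsat : ∀ u ∈ H.verts, ∀ w ∈ H.verts, u ≠ w → (∃ e, G.ends e = s(u, w)) →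
      ∃ e ∈ H.edges \ {e₂}, G.ends e = s(u, w)) :
    ∃ C, Child 𝒯 H C ∧ (⟨H.verts, H.edges \ {e₂}⟩ : Piece V E) ≤ C := by
  set K : Piece V E := ⟨H.verts, H.edges \ {e₂}⟩ with hKdef
  have hKleH : K ≤ H := ⟨subset_rfl, Set.diff_subset⟩
  have hKneH : K ≠ H := by
    intro hEq
    have : e₂ ∈ K.edges := by rw [hEq]; exact he₂H
    exact this.2 rfl
  have hKlt : K < H := lt_of_le_of_ne hKleH hKneH
  have hKtube : G.IsTube K := by
    rw [isTube_iff]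
    exact ⟨⟨fun e he x hx => (node_pretube hmax hH).closed e he.1 x hx, hconn, hsat⟩,
      ne_whole_of_lt hKlt⟩
  refine key_lemma hmax hv₀ hfin hH hKtube hKlt ?_
  intro C hC
  left
  exact ⟨hC.2.1.le.1, fun e he => ⟨hC.2.1.le.2 he, fun hEq => he₂own C hC (hEq ▸ he)⟩⟩

/-- Removing a redundant copy of an edge type. -/
theorem remove_dup (hmax : G.IsMaximalTubing 𝒯) {v₀ : V}
    (hv₀ : G.compPiece v₀ ∉ 𝒯) (hfin : 𝒯.Finite) {H : Piece V E}
    (hH : H ∈ insert (G.compPiece v₀) 𝒯) {e₁ e₂ : E} (he₂H : e₂ ∈ H.edges)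
    (he₂own : ∀ C, Child 𝒯 H C → e₂ ∉ C.edges) (he₁ : e₁ ∈ H.edges) (hne : e₁ ≠ e₂)
    (heq : G.ends e₁ = G.ends e₂) :
    ∃ C, Child 𝒯 H C ∧ (⟨H.verts, H.edges \ {e₂}⟩ : Piece V E) ≤ C := by
  have hHpre := node_pretube hmax hH
  refine remove_edge_child hmax hv₀ hfin hH he₂H he₂own ⟨hHpre.conn.1, ?_⟩ ?_
  · intro u hu w hw
    refine rtg_lift ?_ (hHpre.conn.2 u hu w hw)
    rintro a b ⟨e, he, hends⟩
    by_cases hee : e = e₂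
    · exact Relation.ReflTransGen.single ⟨e₁, ⟨he₁, hne⟩, by rw [heq, ← hee, hends]⟩
    · exact Relation.ReflTransGen.single ⟨e, ⟨he, hee⟩, hends⟩
  · intro u hu w hw hneuw hex
    obtain ⟨e, he, hends⟩ := hHpre.sat u hu w hw hneuw hex
    by_cases hee : e = e₂
    · exact ⟨e₁, ⟨he₁, hne⟩, by rw [heq, ← hee, hends]⟩
    · exact ⟨e, ⟨he, hee⟩, hends⟩

/-- Removing a loop. -/
theorem remove_loop (hmax : G.IsMaximalTubing 𝒯) {v₀ : V}
    (hv₀ : G.compPiece v₀ ∉ 𝒯) (hfin : 𝒯.Finite) {H : Piece V E}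
    (hH : H ∈ insert (G.compPiece v₀) 𝒯) {e₂ : E} (he₂H : e₂ ∈ H.edges)
    (he₂own : ∀ C, Child 𝒯 H C → e₂ ∉ C.edges) (hdiag : (G.ends e₂).IsDiag) :
    ∃ C, Child 𝒯 H C ∧ (⟨H.verts, H.edges \ {e₂}⟩ : Piece V E) ≤ C := by
  have hHpre := node_pretube hmax hH
  obtain ⟨z, z', hz⟩ := sym2_exists (G.ends e₂)
  have hzz : z = z' := by
    rw [hz, Sym2.mk_isDiag_iff] at hdiag
    exact hdiag
  rw [← hzz] at hz
  refine remove_edge_child hmax hv₀ hfin hH he₂H he₂own ⟨hHpre.conn.1, ?_⟩ ?_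
  · intro u hu w hw
    refine rtg_lift ?_ (hHpre.conn.2 u hu w hw)
    rintro a b ⟨e, he, hends⟩
    by_cases hee : e = e₂
    · have : s(a, b) = s(z, z) := by rw [← hends, hee, hz]
      rw [Sym2.eq_iff] at this
      have hab : a = b := by
        rcases this with ⟨rfl, rfl⟩ | ⟨rfl, rfl⟩ <;> rfl
      subst hab
      exact Relation.ReflTransGen.refl
    · exact Relation.ReflTransGen.single ⟨e, ⟨he, hee⟩, hends⟩
  · intro u hu w hw hneuw hex
    obtain ⟨e, he, hends⟩ := hHpre.sat u hu w hw hneuw hex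
    have hee : e ≠ e₂ := by
      intro hEq
      rw [hEq, hz, Sym2.eq_iff] at hends
      rcases hends with ⟨rfl, rfl⟩ | ⟨rfl, rfl⟩ <;> exact hneuw rfl
    exact ⟨e, ⟨he, hee⟩, hends⟩

/-- Every non-`u₀` vertex of `H` lies in a child. -/
theorem a_cor (hmax : G.IsMaximalTubing 𝒯) {v₀ : V} (hv₀ : G.compPiece v₀ ∉ 𝒯)
    (hfin : 𝒯.Finite) {H : Piece V E} (hH : H ∈ insert (G.compPiece v₀) 𝒯)
    {u₀ : V} (hu₀ : u₀ ∈ ownVerts 𝒯 H) {x : V} (hx : x ∈ H.verts) (hxu : x ≠ u₀) :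
    ∃ C, Child 𝒯 H C ∧ x ∈ C.verts := by
  obtain ⟨C, hC, h1, _⟩ := S_lemma hmax hv₀ hfin hH hu₀ hx hxu
  exact ⟨C, hC, h1 x Relation.ReflTransGen.refl⟩

/-- Every own edge of `H` is incident to `u₀`. -/
theorem b_cor (hmax : G.IsMaximalTubing 𝒯) {v₀ : V} (hv₀ : G.compPiece v₀ ∉ 𝒯)
    (hfin : 𝒯.Finite) {H : Piece V E} (hH : H ∈ insert (G.compPiece v₀) 𝒯)
    {u₀ : V} (hu₀ : u₀ ∈ ownVerts 𝒯 H) {e : E} (he : e ∈ ownEdges 𝒯 H) :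
    u₀ ∈ G.ends e := by
  by_contra hu₀e
  obtain ⟨x, y, hxy⟩ := sym2_exists (G.ends e)
  have hxmem : x ∈ G.ends e := by rw [hxy]; exact Sym2.mem_mk_left _ _
  have hymem : y ∈ G.ends e := by rw [hxy]; exact Sym2.mem_mk_right _ _
  have hxH : x ∈ H.verts := (node_pretube hmax hH).closed e he.1 x hxmem
  have hxu : x ≠ u₀ := fun hEq => hu₀e (hEq ▸ hxmem)
  have hyu : y ≠ u₀ := fun hEq => hu₀e (hEq ▸ hymem)
  obtain ⟨C, hC, h1, h2⟩ := S_lemma hmax hv₀ hfin hH hu₀ hxH hxu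
  have heC : e ∈ C.edges := by
    refine h2 e he.1 ?_
    intro z hz
    rw [hxy, Sym2.mem_iff] at hz
    rcases hz with rfl | rfl
    · exact Relation.ReflTransGen.refl
    · exact Relation.ReflTransGen.single (Or.inl ⟨hxu, hyu, e, he.1, hxy⟩)
  exact he.2 C hC heC

end Removal

section LocalCount

variable {V E : Type} {G : Pseudograph V E} {𝒯 : Set (Piece V E)}

theorem local_count (hmax : G.IsMaximalTubing 𝒯) {v₀ : V} (hv₀ : G.compPiece v₀ ∉ 𝒯)
    (hfin : 𝒯.Finite) {H : Piece V E} (hH : H ∈ insert (G.compPiece v₀) 𝒯) :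
    (ownVerts 𝒯 H).ncard + (ownEdges 𝒯 H).ncard = (ownTypes G 𝒯 H).ncard + 1 := by
  by_cases hU : (ownVerts 𝒯 H).Nonempty
  · obtain ⟨u₀, hu₀⟩ := hU
    have hUeq : ownVerts 𝒯 H = {u₀} := by
      apply Set.eq_singleton_iff_unique_mem.mpr
      refine ⟨hu₀, ?_⟩
      intro v hv
      by_contra hvne
      obtain ⟨C, hC, hvC⟩ := a_cor hmax hv₀ hfin hH hu₀ hv.1 hvne
      exact hv.2 C hC hvC
    have hinj : Set.InjOn G.ends (ownEdges 𝒯 H) := by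
      intro e₁ h₁ e₂ h₂ heq
      by_contra hne
      obtain ⟨C, hC, hKC⟩ :=
        remove_dup hmax hv₀ hfin hH h₂.1 (fun C hC => h₂.2 C hC) h₁.1 hne heq
      exact hu₀.2 C hC (hKC.1 hu₀.1)
    have hnoloop : ∀ e ∈ ownEdges 𝒯 H, ¬ (G.ends e).IsDiag := by
      intro e he hdiag
      obtain ⟨C, hC, hKC⟩ :=
        remove_loop hmax hv₀ hfin hH he.1 (fun C hC => he.2 C hC) hdiag
      exact hu₀.2 C hC (hKC.1 hu₀.1)
    have himg : ownTypes G 𝒯 H = G.ends '' ownEdges 𝒯 H := by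
      ext p
      constructor
      · rintro ⟨hdiag, ⟨e, heH, hends⟩, hchild⟩
        exact ⟨e, ⟨heH, fun C hC heC => hchild C hC ⟨e, heC, hends⟩⟩, hends⟩
      · rintro ⟨e, he, rfl⟩
        refine ⟨hnoloop e he, ⟨e, he.1, rfl⟩, ?_⟩
        rintro C hC ⟨e', he'C, hends'⟩
        have hu₀mem : u₀ ∈ G.ends e' := by
          rw [hends']
          exact b_cor hmax hv₀ hfin hH hu₀ he
        exact hu₀.2 C hC ((hmax.1.1 C hC.1).pretube.closed e' he'C u₀ hu₀mem)
    rw [hUeq, Set.ncard_singleton, himg, Set.ncard_image_of_injOn hinj]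
    omega
  · have hHpre := node_pretube hmax hH
    have hUempty : ownVerts 𝒯 H = ∅ := Set.not_nonempty_iff_eq_empty.1 hU
    have hallchild : ∀ x ∈ H.verts, ∃ C, Child 𝒯 H C ∧ x ∈ C.verts := by
      intro x hx
      by_contra hc
      push_neg at hc
      have : x ∈ ownVerts 𝒯 H := ⟨hx, fun C hC hxC => hc C hC hxC⟩
      rw [hUempty] at this
      exact this
    obtain ⟨y₀, hy₀⟩ := hHpre.conn.1
    obtain ⟨C₀, hC₀, hy₀C₀⟩ := hallchild y₀ hy₀
    have hCverts : ∀ C, Child 𝒯 H C → C.verts = H.verts := by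
      intro C hC
      apply subset_antisymm hC.2.1.le.1
      intro x hx
      by_contra hxC
      have hCtube := hmax.1.1 C hC.1
      obtain ⟨y, hy⟩ := hCtube.pretube.conn.1
      have hwalk := hHpre.conn.2 y (hC.2.1.le.1 hy) x hx
      obtain ⟨a, haC, b, hbC, e, heH, hends⟩ := exists_crossing hwalk hy hxC
      have hbH : b ∈ H.verts := hHpre.closed e heH b (by rw [hends]; exact Sym2.mem_mk_right _ _)
      obtain ⟨C', hC', hbC'⟩ := hallchild b hbH
      have hne : C ≠ C' := fun hEq => hbC (hEq ▸ hbC')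
      exact (child_disjNadj hmax hC hC' hne).2 ⟨e, a, haC, b, hbC', hends⟩
    have huniq : ∀ C, Child 𝒯 H C → C = C₀ := by
      intro C hC
      by_contra hne
      have hdisj := child_disjNadj hmax hC hC₀ hne
      have := Set.disjoint_left.1 hdisj.1 (by rw [hCverts C hC]; exact hy₀) hy₀C₀
      exact this
    have hownE : ownEdges 𝒯 H = H.edges \ C₀.edges := by
      ext e
      constructor
      · intro he
        exact ⟨he.1, he.2 C₀ hC₀⟩
      · intro he
        exact ⟨he.1, fun C hC => (huniq C hC) ▸ he.2⟩
    have hC₀tube := hmax.1.1 C₀ hC₀.1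
    obtain ⟨e₀, he₀⟩ : ∃ e₀, e₀ ∈ H.edges \ C₀.edges := by
      by_contra hc
      push_neg at hc
      have hle : H ≤ C₀ := ⟨(hCverts C₀ hC₀).symm.le, fun e he => by
        by_contra h'; exact hc e ⟨he, h'⟩⟩
      exact hC₀.2.1.ne (le_antisymm hC₀.2.1.le hle)
    have hsingle : ownEdges 𝒯 H = {e₀} := by
      rw [hownE]
      apply Set.eq_singleton_iff_unique_mem.mpr
      refine ⟨he₀, ?_⟩
      intro e₂ he₂
      by_contra hne
      have hconn : G.ConnectedPiece ⟨H.verts, H.edges \ {e₂}⟩ := by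
        refine ⟨hHpre.conn.1, ?_⟩
        intro u hu w hw
        have hu' : u ∈ C₀.verts := by rw [hCverts C₀ hC₀]; exact hu
        have hw' : w ∈ C₀.verts := by rw [hCverts C₀ hC₀]; exact hw
        refine rtg_lift ?_ (hC₀tube.pretube.conn.2 u hu' w hw')
        rintro a b ⟨e, he, hends⟩
        refine Relation.ReflTransGen.single ⟨e, ⟨hC₀.2.1.le.2 he, ?_⟩, hends⟩
        intro hEq
        exact he₂.2 (hEq ▸ he)
      have hsat : ∀ u ∈ H.verts, ∀ w ∈ H.verts, u ≠ w → (∃ e, G.ends e = s(u, w)) →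
          ∃ e ∈ H.edges \ {e₂}, G.ends e = s(u, w) := by
        intro u hu w hw hneuw hex
        have hu' : u ∈ C₀.verts := by rw [hCverts C₀ hC₀]; exact hu
        have hw' : w ∈ C₀.verts := by rw [hCverts C₀ hC₀]; exact hw
        obtain ⟨e, he, hends⟩ := hC₀tube.pretube.sat u hu' w hw' hneuw hex
        exact ⟨e, ⟨hC₀.2.1.le.2 he, fun hEq => he₂.2 (hEq ▸ he)⟩, hends⟩
      obtain ⟨C, hC, hKC⟩ := remove_edge_child hmax hv₀ hfin hH he₂.1
        (fun C hC => (huniq C hC) ▸ he₂.2) hconn hsat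
      rw [huniq C hC] at hKC
      exact he₀.2 (hKC.2 ⟨he₀.1, fun hEq => hne (hEq.symm ▸ rfl)⟩)
    have hTempty : ownTypes G 𝒯 H = ∅ := by
      ext p
      simp only [Set.mem_empty_iff_false, iff_false]
      rintro ⟨hdiag, ⟨e, heH, hends⟩, hchild⟩
      obtain ⟨u, w, hp⟩ := sym2_exists p
      have hneuw : u ≠ w := by
        rw [hp, Sym2.mk_isDiag_iff] at hdiag
        exact hdiag
      have huH : u ∈ H.verts := hHpre.closed e heH u (by rw [hends, hp]; exact Sym2.mem_mk_left _ _)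
      have hwH : w ∈ H.verts := hHpre.closed e heH w (by rw [hends, hp]; exact Sym2.mem_mk_right _ _)
      have hu' : u ∈ C₀.verts := by rw [hCverts C₀ hC₀]; exact huH
      have hw' : w ∈ C₀.verts := by rw [hCverts C₀ hC₀]; exact hwH
      obtain ⟨e', he', hends'⟩ := hC₀tube.pretube.sat u hu' w hw' hneuw ⟨e, by rw [hends, hp]⟩
      exact hchild C₀ hC₀ ⟨e', he', by rw [hends', hp]⟩
    rw [hUempty, hTempty, hsingle, Set.ncard_singleton, Set.ncard_empty, Set.ncard_empty]

end LocalCount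

section Partition

variable {V E : Type} {G : Pseudograph V E} {𝒯 : Set (Piece V E)}

theorem node_compat (hmax : G.IsMaximalTubing 𝒯) {v₀ : V} (hv₀ : G.compPiece v₀ ∉ 𝒯)
    {H K : Piece V E} (hH : H ∈ insert (G.compPiece v₀) 𝒯)
    (hK : K ∈ insert (G.compPiece v₀) 𝒯) (hne : H ≠ K) :
    H < K ∨ K < H ∨ G.DisjNadj H K := by
  rcases Set.mem_insert_iff.1 hH with rfl | hHT
  · rcases Set.mem_insert_iff.1 hK with rfl | hKT
    · exact absurd rfl hne
    · rcases comp_compatible (hmax.1.1 K hKT).pretube v₀ with h | h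
      · exact Or.inr (Or.inl (lt_of_le_of_ne h fun hEq => hne hEq.symm))
      · exact Or.inr (Or.inr h)
  · rcases Set.mem_insert_iff.1 hK with rfl | hKT
    · rcases comp_compatible (hmax.1.1 H hHT).pretube v₀ with h | h
      · exact Or.inl (lt_of_le_of_ne h hne)
      · exact Or.inr (Or.inr h.symm)
    · have := hmax.1.2.1 H hHT K hKT hne
      rwa [compatible_iff] at this
  
theorem comp_mem_nodes (hmax : G.IsMaximalTubing 𝒯) {v₀ : V} (hv₀ : G.compPiece v₀ ∉ 𝒯)
    (v : V) : G.compPiece v ∈ insert (G.compPiece v₀) 𝒯 := by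
  by_cases hv : G.compPiece v ∈ 𝒯
  · exact Set.mem_insert_of_mem _ hv
  · rw [missing_unique hmax hv hv₀]
    exact Set.mem_insert _ _

theorem nodeV_exists_unique (hmax : G.IsMaximalTubing 𝒯) {v₀ : V}
    (hv₀ : G.compPiece v₀ ∉ 𝒯) (hfin : 𝒯.Finite) (v : V) :
    ∃! H, H ∈ insert (G.compPiece v₀) 𝒯 ∧ v ∈ ownVerts 𝒯 H := by
  have hfinN : (insert (G.compPiece v₀) 𝒯).Finite := hfin.insert _
  have hSfin : {H | H ∈ insert (G.compPiece v₀) 𝒯 ∧ v ∈ H.verts}.Finite :=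
    hfinN.subset (fun H hh => hh.1)
  have hSne : {H | H ∈ insert (G.compPiece v₀) 𝒯 ∧ v ∈ H.verts}.Nonempty :=
    ⟨G.compPiece v, comp_mem_nodes hmax hv₀ v, mem_comp_self v⟩
  obtain ⟨H₀, ⟨hH₀N, hvH₀⟩, hmin⟩ : ∃ H₀ ∈ _, ∀ C ∈ _, C ≤ H₀ → H₀ = C := by
    obtain ⟨b, hb⟩ := hSfin.exists_minimal hSne
    exact ⟨b, hb.1, fun C hC h => le_antisymm (hb.2 hC h) h⟩
  have hown : v ∈ ownVerts 𝒯 H₀ := by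
    refine ⟨hvH₀, ?_⟩
    intro C hC hvC
    have := hmin C ⟨Set.mem_insert_of_mem _ hC.1, hvC⟩ hC.2.1.le
    exact hC.2.1.ne (id this.symm)
  refine ⟨H₀, ⟨hH₀N, hown⟩, ?_⟩
  rintro H ⟨hHN, hvH⟩
  by_contra hne
  rcases node_compat hmax hv₀ hHN hH₀N hne with hlt | hlt | hdisj
  · -- H < H₀ : H is a tube in 𝒯 (not the component), so H ≤ child of H₀
    have hHT : H ∈ 𝒯 := by
      rcases Set.mem_insert_iff.1 hHN with rfl | h
      · exact absurd hlt (not_P0_lt hmax hv₀ hH₀N)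
      · exact h
    obtain ⟨C, hC, hHC⟩ := exists_child_le hfin hHT hlt
    exact hown.2 C hC (hHC.1 hvH.1)
  · have hH₀T : H₀ ∈ 𝒯 := by
      rcases Set.mem_insert_iff.1 hH₀N with rfl | h
      · exact absurd hlt (not_P0_lt hmax hv₀ hHN)
      · exact h
    obtain ⟨C, hC, hHC⟩ := exists_child_le hfin hH₀T hlt
    exact hvH.2 C hC (hHC.1 hvH₀)
  · exact Set.disjoint_left.1 hdisj.1 hvH.1 hvH₀

theorem nodeE_exists_unique (hmax : G.IsMaximalTubing 𝒯) {v₀ : V}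
    (hv₀ : G.compPiece v₀ ∉ 𝒯) (hfin : 𝒯.Finite) (e : E) :
    ∃! H, H ∈ insert (G.compPiece v₀) 𝒯 ∧ e ∈ ownEdges 𝒯 H := by
  obtain ⟨u, w, hends⟩ := sym2_exists (G.ends e)
  have humem : u ∈ G.ends e := by rw [hends]; exact Sym2.mem_mk_left _ _
  have hfinN : (insert (G.compPiece v₀) 𝒯).Finite := hfin.insert _
  have hSfin : {H | H ∈ insert (G.compPiece v₀) 𝒯 ∧ e ∈ H.edges}.Finite :=
    hfinN.subset (fun H hh => hh.1)
  have hSne : {H | H ∈ insert (G.compPiece v₀) 𝒯 ∧ e ∈ H.edges}.Nonempty := by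
    refine ⟨G.compPiece u, comp_mem_nodes hmax hv₀ u, ?_⟩
    intro x hx
    rw [hends, Sym2.mem_iff] at hx
    rcases hx with rfl | rfl
    · exact Relation.ReflTransGen.refl
    · exact Relation.ReflTransGen.single ⟨e, hends⟩
  obtain ⟨H₀, ⟨hH₀N, heH₀⟩, hmin⟩ : ∃ H₀ ∈ _, ∀ C ∈ _, C ≤ H₀ → H₀ = C := by
    obtain ⟨b, hb⟩ := hSfin.exists_minimal hSne
    exact ⟨b, hb.1, fun C hC h => le_antisymm (hb.2 hC h) h⟩
  have hown : e ∈ ownEdges 𝒯 H₀ := by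
    refine ⟨heH₀, ?_⟩
    intro C hC heC
    have := hmin C ⟨Set.mem_insert_of_mem _ hC.1, heC⟩ hC.2.1.le
    exact hC.2.1.ne (id this.symm)
  refine ⟨H₀, ⟨hH₀N, hown⟩, ?_⟩
  rintro H ⟨hHN, heH⟩
  by_contra hne
  rcases node_compat hmax hv₀ hHN hH₀N hne with hlt | hlt | hdisj
  · have hHT : H ∈ 𝒯 := by
      rcases Set.mem_insert_iff.1 hHN with rfl | h
      · exact absurd hlt (not_P0_lt hmax hv₀ hH₀N)
      · exact h
    obtain ⟨C, hC, hHC⟩ := exists_child_le hfin hHT hlt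
    exact hown.2 C hC (hHC.2 heH.1)
  · have hH₀T : H₀ ∈ 𝒯 := by
      rcases Set.mem_insert_iff.1 hH₀N with rfl | h
      · exact absurd hlt (not_P0_lt hmax hv₀ hHN)
      · exact h
    obtain ⟨C, hC, hHC⟩ := exists_child_le hfin hH₀T hlt
    exact heH.2 C hC (hHC.2 hown.1)
  · have huH : u ∈ H.verts := (node_pretube hmax hHN).closed e heH.1 u humem
    have huH₀ : u ∈ H₀.verts := (node_pretube hmax hH₀N).closed e hown.1 u humem
    exact Set.disjoint_left.1 hdisj.1 huH huH₀

theorem nodeT_exists_unique (hmax : G.IsMaximalTubing 𝒯) {v₀ : V}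
    (hv₀ : G.compPiece v₀ ∉ 𝒯) (hfin : 𝒯.Finite) {p : Sym2 V}
    (hp : ¬ p.IsDiag ∧ ∃ e, G.ends e = p) :
    ∃! H, H ∈ insert (G.compPiece v₀) 𝒯 ∧ p ∈ ownTypes G 𝒯 H := by
  obtain ⟨hdiag, e, hends⟩ := hp
  obtain ⟨u, w, hp'⟩ := sym2_exists p
  have hneuw : u ≠ w := by rw [hp', Sym2.mk_isDiag_iff] at hdiag; exact hdiag
  have humem : u ∈ p := by rw [hp']; exact Sym2.mem_mk_left _ _
  have hwmem : w ∈ p := by rw [hp']; exact Sym2.mem_mk_right _ _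
  have hfinN : (insert (G.compPiece v₀) 𝒯).Finite := hfin.insert _
  have hSfin : {H | H ∈ insert (G.compPiece v₀) 𝒯 ∧ G.realizes H p}.Finite :=
    hfinN.subset (fun H hh => hh.1)
  have hSne : {H | H ∈ insert (G.compPiece v₀) 𝒯 ∧ G.realizes H p}.Nonempty := by
    refine ⟨G.compPiece u, comp_mem_nodes hmax hv₀ u, e, ?_, hends⟩
    intro x hx
    rw [hends, hp', Sym2.mem_iff] at hx
    rcases hx with rfl | rfl
    · exact Relation.ReflTransGen.refl
    · exact Relation.ReflTransGen.single ⟨e, by rw [hends, hp']⟩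
  obtain ⟨H₀, ⟨hH₀N, hrH₀⟩, hmin⟩ : ∃ H₀ ∈ _, ∀ C ∈ _, C ≤ H₀ → H₀ = C := by
    obtain ⟨b, hb⟩ := hSfin.exists_minimal hSne
    exact ⟨b, hb.1, fun C hC h => le_antisymm (hb.2 hC h) h⟩
  have hown : p ∈ ownTypes G 𝒯 H₀ := by
    refine ⟨hdiag, hrH₀, ?_⟩
    intro C hC hrC
    have := hmin C ⟨Set.mem_insert_of_mem _ hC.1, hrC⟩ hC.2.1.le
    exact hC.2.1.ne (id this.symm)
  have hverts : ∀ {A : Piece V E}, G.Pretube A → G.realizes A p → u ∈ A.verts ∧ w ∈ A.verts := by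
    rintro A hApre ⟨e', he', hends'⟩
    exact ⟨hApre.closed e' he' u (by rw [hends']; exact humem),
           hApre.closed e' he' w (by rw [hends']; exact hwmem)⟩
  have hup : ∀ {A B : Piece V E}, G.Pretube A → G.Pretube B → A ≤ B →
      G.realizes A p → G.realizes B p := by
    intro A B hApre hBpre hAB hrA
    obtain ⟨huA, hwA⟩ := hverts hApre hrA
    obtain ⟨e', he', hends'⟩ :=
      hBpre.sat u (hAB.1 huA) w (hAB.1 hwA) hneuw ⟨e, by rw [hends, hp']⟩
    exact ⟨e', he', by rw [hends', hp']⟩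
  refine ⟨H₀, ⟨hH₀N, hown⟩, ?_⟩
  rintro H ⟨hHN, hownH⟩
  by_contra hne
  rcases node_compat hmax hv₀ hHN hH₀N hne with hlt | hlt | hdisj
  · have hHT : H ∈ 𝒯 := by
      rcases Set.mem_insert_iff.1 hHN with rfl | h
      · exact absurd hlt (not_P0_lt hmax hv₀ hH₀N)
      · exact h
    obtain ⟨C, hC, hHC⟩ := exists_child_le hfin hHT hlt
    exact hown.2.2 C hC (hup (node_pretube hmax hHN) (hmax.1.1 C hC.1).pretube hHC hownH.2.1)
  · have hH₀T : H₀ ∈ 𝒯 := by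
      rcases Set.mem_insert_iff.1 hH₀N with rfl | h
      · exact absurd hlt (not_P0_lt hmax hv₀ hHN)
      · exact h
    obtain ⟨C, hC, hHC⟩ := exists_child_le hfin hH₀T hlt
    exact hownH.2.2 C hC (hup (node_pretube hmax hH₀N) (hmax.1.1 C hC.1).pretube hHC hown.2.1)
  · obtain ⟨huH, -⟩ := hverts (node_pretube hmax hHN) hownH.2.1
    obtain ⟨huH₀, -⟩ := hverts (node_pretube hmax hH₀N) hown.2.1
    exact Set.disjoint_left.1 hdisj.1 huH huH₀

end Partition
/-- Every maximal tubing of a pseudograph with `n` nodes and `r` redundant edges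
(`r` = number of edges minus number of edges of the underlying simple graph) has exactly
`n - 1 + r` tubes. -/
theorem maximal_tubing_card {V E : Type} [Fintype V] [Fintype E] (G : Pseudograph V E)
    (𝒯 : Set (Piece V E)) (h : IsMaximalTubing G 𝒯) :
    𝒯.ncard = Fintype.card V - 1 +
      (Fintype.card E - {p : Sym2 V | ¬ p.IsDiag ∧ ∃ e, G.ends e = p}.ncard) := by
  classical
  have hv0ex : ∃ v, G.compPiece v ∉ 𝒯 := by
    by_contra hc
    push_neg at hc
    exact h.1.2.2 hc
  obtain ⟨v₀, hv₀⟩ := hv0ex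
  have hfin : 𝒯.Finite := Set.toFinite 𝒯
  haveI : Fintype (Piece V E) := Fintype.ofFinite _
  set sSet : Set (Sym2 V) := {p : Sym2 V | ¬ p.IsDiag ∧ ∃ e, G.ends e = p} with hsSet
  set N : Set (Piece V E) := insert (G.compPiece v₀) 𝒯 with hN
  set Nt : Finset (Piece V E) := N.toFinset with hNt
  have hmemNt : ∀ {H : Piece V E}, H ∈ Nt ↔ H ∈ N := fun {H} => Set.mem_toFinset
  -- the vertex fibration
  choose nodeV h1V h2V using fun v => nodeV_exists_unique h hv₀ hfin v
  have hfibV : ∀ H ∈ N, ownVerts 𝒯 H = {v | nodeV v = H} := by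
    intro H hHN
    ext v
    constructor
    · intro hv
      exact (h2V v H ⟨hHN, hv⟩).symm
    · rintro rfl
      exact (h1V v).2
  have hcardV : Fintype.card V = ∑ H ∈ Nt, (ownVerts 𝒯 H).ncard := by
    rw [← Finset.card_univ,
      Finset.card_eq_sum_card_fiberwise
        (f := nodeV) (t := Nt) (fun v _ => hmemNt.2 (h1V v).1)]
    apply Finset.sum_congr rfl
    intro H hHNt
    rw [hfibV H (hmemNt.1 hHNt), Set.ncard_eq_toFinset_card', Set.toFinset_setOf]
  -- the edge fibration
  choose nodeE h1E h2E using fun e => nodeE_exists_unique h hv₀ hfin e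
  have hfibE : ∀ H ∈ N, ownEdges 𝒯 H = {e | nodeE e = H} := by
    intro H hHN
    ext e
    constructor
    · intro he
      exact (h2E e H ⟨hHN, he⟩).symm
    · rintro rfl
      exact (h1E e).2
  have hcardE : Fintype.card E = ∑ H ∈ Nt, (ownEdges 𝒯 H).ncard := by
    rw [← Finset.card_univ,
      Finset.card_eq_sum_card_fiberwise
        (f := nodeE) (t := Nt) (fun e _ => hmemNt.2 (h1E e).1)]
    apply Finset.sum_congr rfl
    intro H hHNt
    rw [hfibE H (hmemNt.1 hHNt), Set.ncard_eq_toFinset_card', Set.toFinset_setOf]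
  -- the type fibration
  have hTtot : ∀ p : Sym2 V, ∃ H, (p ∈ sSet → (H ∈ N ∧ p ∈ ownTypes G 𝒯 H)) ∧
      (∀ y, y ∈ N ∧ p ∈ ownTypes G 𝒯 y → y = H) := by
    intro p
    by_cases hp : p ∈ sSet
    · obtain ⟨H, hH, huni⟩ := nodeT_exists_unique h hv₀ hfin hp
      exact ⟨H, fun _ => hH, huni⟩
    · refine ⟨G.compPiece v₀, fun h' => absurd h' hp, ?_⟩
      rintro y ⟨hyN, hyT⟩
      exfalso
      obtain ⟨e, -, he⟩ := hyT.2.1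
      exact hp ⟨hyT.1, e, he⟩
  choose nodeT h1T h2T using hTtot
  have hfibT : ∀ H ∈ N, ownTypes G 𝒯 H = {p | p ∈ sSet ∧ nodeT p = H} := by
    intro H hHN
    ext p
    constructor
    · intro hp
      have hpS : p ∈ sSet := by
        obtain ⟨e, -, he⟩ := hp.2.1
        exact ⟨hp.1, e, he⟩
      exact ⟨hpS, (h2T p H ⟨hHN, hp⟩).symm⟩
    · rintro ⟨hpS, rfl⟩
      exact (h1T p hpS).2
  have hcardT : sSet.ncard = ∑ H ∈ Nt, (ownTypes G 𝒯 H).ncard := by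
    rw [Set.ncard_eq_toFinset_card',
      Finset.card_eq_sum_card_fiberwise
        (f := nodeT) (t := Nt) (fun p hp => hmemNt.2 (h1T p (Set.mem_toFinset.1 hp)).1)]
    apply Finset.sum_congr rfl
    intro H hHNt
    rw [hfibT H (hmemNt.1 hHNt), Set.ncard_eq_toFinset_card']
    congr 1
    ext p
    rw [Set.mem_toFinset, Finset.mem_filter, Set.mem_toFinset]
    exact Iff.rfl
  -- the local count
  have hsum : ∀ H ∈ Nt, (ownVerts 𝒯 H).ncard + (ownEdges 𝒯 H).ncard
      = (ownTypes G 𝒯 H).ncard + 1 :=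
    fun H hHNt => local_count h hv₀ hfin (hmemNt.1 hHNt)
  have hmain : Fintype.card V + Fintype.card E = sSet.ncard + Nt.card := by
    rw [hcardV, hcardE, hcardT, ← Finset.sum_add_distrib, Finset.sum_congr rfl hsum,
      Finset.sum_add_distrib, Finset.sum_const, smul_eq_mul, mul_one]
  have hNcard : Nt.card = 𝒯.ncard + 1 := by
    rw [hNt, ← Set.ncard_eq_toFinset_card', hN, Set.ncard_insert_of_notMem hv₀ hfin]
  have hVpos : 1 ≤ Fintype.card V := Fintype.card_pos_iff.2 ⟨v₀⟩
  have hsle : sSet.ncard ≤ Fintype.card E := by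
    have hsub : sSet ⊆ Set.range G.ends := by
      rintro p ⟨-, e, he⟩
      exact ⟨e, he⟩
    calc sSet.ncard ≤ (Set.range G.ends).ncard := Set.ncard_le_ncard hsub (Set.toFinite _)
    _ = (G.ends '' Set.univ).ncard := by rw [Set.image_univ]
    _ ≤ (Set.univ : Set E).ncard := Set.ncard_image_le (Set.toFinite _)
    _ = Fintype.card E := by rw [Set.ncard_univ, Nat.card_eq_fintype_card]
  omega

end Pseudograph
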